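/- Suppose Γ : Z_{2^k}^n → Z_{2^k}^n is an additive group automorphism (linear over Z_{2^k}) that is also an isometry of (Z_{2^k}^n, d), where d = d* or d = d^◇. Then Γ(x) = z ∘ π(x) for some coordinate permutation π and some z ∈ ({units of Z_{2^k}})^n, where ∘ is coordinatewise multiplication. -/

import Mathlib

/-!
Both weights vanish only at `0` and take their least nonzero value at `1`, so a vector of
weight `wt 1` has at most one nonzero coordinate. An isometry with `Γ 0 = 0` preserves the
weight `d(0, x)`, hence each `Γ eᵢ` is a single entry `cᵢ` in some coordinate `σ i`.
Surjectivity of `Γ` makes `σ` onto, hence a permutation, and solving `Γ x = eⱼ` then shows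
that each `cᵢ` is a unit.
-/

/-- `wt*` on `Z_{2^k}`. -/
def wtStarK (k : ℕ) (x : ZMod (2 ^ k)) : ℕ :=
  if x = 0 then 0 else if x = (2 ^ (k - 1) : ZMod (2 ^ k)) then 2 ^ (k - 1) else 2 ^ (k - 2)

/-- The induced distance `d*`. -/
def dStarK (k n : ℕ) (x y : Fin n → ZMod (2 ^ k)) : ℕ :=
  ∑ i, wtStarK k (y i - x i)

/-- The weight `wt^◇`. -/
def wtDia {M : ℕ} (x : ZMod M) : ℕ :=
  if x = 0 then 0 else if Odd x.val then 1 else 2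

/-- The induced distance `d^◇`. -/
def dDia {M : ℕ} (n : ℕ) (x y : Fin n → ZMod M) : ℕ :=
  ∑ i, wtDia (y i - x i)

open Finset

def LinearMap.ofMapSMulAdd {R M N : Type*} [Semiring R] [AddCommMonoid M] [AddCommGroup N]
    [Module R M] [Module R N] (g : M → N) (hg : ∀ (c : R) x y, g (c • x + y) = c • g x + g y) :
    M →ₗ[R] N :=
  have hg0 : g 0 = 0 := by simpa using hg 1 0 0
  { toFun := g
    map_add' := fun x y => by simpa using hg 1 x y
    map_smul' := fun c x => by simpa [hg0] using hg c x 0 }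

section

variable {ι R : Type*} [Fintype ι] [DecidableEq ι]

theorem support_subsingleton_of_sum_weight_lt [Zero R] (w : R → ℕ) {m : ℕ}
    (hw : ∀ a ≠ 0, m ≤ w a) {v : ι → R} (hv : ∑ j, w (v j) < 2 * m) :
    (Function.support v).Subsingleton := by
  intro j hj j' hj'
  by_contra hne
  have hpair : w (v j) + w (v j') ≤ ∑ t, w (v t) := by
    rw [← sum_pair hne (f := fun t => w (v t))]
    exact sum_le_sum_of_subset (subset_univ _)
  have := hw _ hj
  have := hw _ hj'
  omega

theorem exists_eq_single_of_support_subsingleton [Zero R] (i : ι) {v : ι → R}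
    (hv : (Function.support v).Subsingleton) : ∃ j c, v = Pi.single j c := by
  by_cases h : ∃ j, v j ≠ 0
  · obtain ⟨j, hj⟩ := h
    refine ⟨j, v j, funext fun t => ?_⟩
    by_cases htj : t = j
    · simp [htj]
    · have hvt : v t = 0 := by_contra fun h => htj (hv h hj)
      simp [htj, hvt]
  · push Not at h
    exact ⟨i, 0, funext fun t => by simp [h t]⟩

variable [CommSemiring R] [Nontrivial R]

theorem LinearEquiv.exists_perm_units_of_map_single (f : (ι → R) ≃ₗ[R] (ι → R))
    (hf : ∀ i, ∃ j c, f (Pi.single i 1) = Pi.single j c) :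
    ∃ (π : Equiv.Perm ι) (z : ι → R), (∀ i, IsUnit (z i)) ∧ ∀ x i, f x i = z i * x (π i) := by
  choose σ c hσ using hf
  have hf_apply : ∀ x j, f x j = ∑ i, (Pi.single (σ i) (x i * c i) : ι → R) j := by
    intro x j
    suffices f x = ∑ i, (Pi.single (σ i) (x i * c i) : ι → R) by rw [this, Finset.sum_apply]
    conv_lhs => rw [← univ_sum_single x]
    refine (map_sum f _ _).trans (sum_congr rfl fun i _ => ?_)
    rw [show Pi.single i (x i) = x i • Pi.single i (1 : R) by
        rw [← Pi.single_smul', smul_eq_mul, mul_one],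
      map_smul, hσ, ← Pi.single_smul', smul_eq_mul]
  have hσ_surj : Function.Surjective σ := by
    intro j
    by_contra! hj
    simpa [Pi.single_eq_of_ne (hj _).symm] using hf_apply (f.symm (Pi.single j 1)) j
  let e := Equiv.ofBijective σ ⟨Finite.injective_iff_surjective.mpr hσ_surj, hσ_surj⟩
  have hf_perm : ∀ x j, f x j = c (e.symm j) * x (e.symm j) := by
    intro x j
    rw [hf_apply, Fintype.sum_eq_single (e.symm j)]
    · rw [show σ (e.symm j) = j from e.apply_symm_apply j, Pi.single_eq_same, mul_comm]
    · intro i hi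
      exact Pi.single_eq_of_ne (fun h => hi (e.symm_apply_eq.mpr h).symm) _
  refine ⟨e.symm, fun j => c (e.symm j), fun j => ?_, hf_perm⟩
  refine IsUnit.of_mul_eq_one (f.symm (Pi.single j 1) (e.symm j)) ?_
  simpa using (hf_perm (f.symm (Pi.single j 1)) j).symm

theorem LinearEquiv.exists_perm_units_of_sum_weight_eq (w : R → ℕ) (hw0 : w 0 = 0)
    (hw1 : w 1 ≠ 0) (hw : ∀ a ≠ 0, w 1 ≤ w a) (f : (ι → R) ≃ₗ[R] (ι → R))
    (hf : ∀ v, ∑ j, w (f v j) = ∑ j, w (v j)) :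
    ∃ (π : Equiv.Perm ι) (z : ι → R), (∀ i, IsUnit (z i)) ∧ ∀ x i, f x i = z i * x (π i) := by
  refine f.exists_perm_units_of_map_single fun i =>
    exists_eq_single_of_support_subsingleton i (support_subsingleton_of_sum_weight_lt w hw ?_)
  have hweight : ∑ j, w ((Pi.single i 1 : ι → R) j) = w 1 := by
    rw [Fintype.sum_eq_single i fun j hj => by rw [Pi.single_eq_of_ne hj, hw0], Pi.single_eq_same]
  rw [hf, hweight]
  omega

end

theorem wtStarK_zero (k : ℕ) : wtStarK k 0 = 0 := by
  simp [wtStarK]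

theorem one_ne_two_pow_pred {k : ℕ} (hk : 2 ≤ k) : (1 : ZMod (2 ^ k)) ≠ 2 ^ (k - 1) := by
  have h2 : 2 ≤ 2 ^ (k - 1) := Nat.le_self_pow (by omega) 2
  have hlt : 2 ^ (k - 1) < 2 ^ k := Nat.pow_lt_pow_right one_lt_two (by omega)
  intro h
  have hcast : ((1 : ℕ) : ZMod (2 ^ k)) = ((2 ^ (k - 1) : ℕ) : ZMod (2 ^ k)) := by
    exact_mod_cast h
  rw [ZMod.natCast_eq_natCast_iff', Nat.mod_eq_of_lt (by omega), Nat.mod_eq_of_lt hlt] at hcast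
  omega

theorem wtStarK_one {k : ℕ} (hk : 2 ≤ k) : wtStarK k 1 = 2 ^ (k - 2) := by
  have : Fact (1 < 2 ^ k) := ⟨Nat.one_lt_two_pow (by omega)⟩
  simp [wtStarK, one_ne_two_pow_pred hk]

theorem two_pow_le_wtStarK {k : ℕ} {a : ZMod (2 ^ k)} (ha : a ≠ 0) :
    2 ^ (k - 2) ≤ wtStarK k a := by
  simp only [wtStarK, if_neg ha]
  split_ifs
  · exact Nat.pow_le_pow_right two_pos (by omega)
  · exact le_rfl

theorem wtDia_zero (M : ℕ) : wtDia (0 : ZMod M) = 0 := by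
  simp [wtDia]

theorem wtDia_one {M : ℕ} [Fact (1 < M)] : wtDia (1 : ZMod M) = 1 := by
  simp [wtDia, ZMod.val_one]

theorem one_le_wtDia {M : ℕ} {a : ZMod M} (ha : a ≠ 0) : 1 ≤ wtDia a := by
  simp only [wtDia, if_neg ha]
  split_ifs <;> omega

/-- Every `Z_{2^k}`-linear bijection of `Z_{2^k}^n` that is an isometry of
`(Z_{2^k}^n, d*)` or of `(Z_{2^k}^n, d^◇)` has the form `Γ(x) = z ∘ π(x)` for a
coordinate permutation `π` and a vector `z` of units (odd elements) of `Z_{2^k}`,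
where `∘` is coordinatewise multiplication. -/
theorem stmt_17 (k n : ℕ) (hk : 2 ≤ k)
    (Γ : (Fin n → ZMod (2 ^ k)) → (Fin n → ZMod (2 ^ k)))
    (hΓ_bij : Function.Bijective Γ)
    (hΓ_lin : ∀ (c : ZMod (2 ^ k)) (x y : Fin n → ZMod (2 ^ k)),
      Γ (c • x + y) = c • Γ x + Γ y)
    (hΓ_iso : (∀ x y, dStarK k n (Γ x) (Γ y) = dStarK k n x y) ∨
      (∀ x y, dDia n (Γ x) (Γ y) = dDia n x y)) :
    ∃ (π : Equiv.Perm (Fin n)) (z : Fin n → ZMod (2 ^ k)),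
      (∀ i, IsUnit (z i)) ∧ ∀ x i, Γ x i = z i * x (π i) := by
  have : Fact (1 < 2 ^ k) := ⟨Nat.one_lt_two_pow (by omega)⟩
  let Γₗ := LinearMap.ofMapSMulAdd Γ hΓ_lin
  have hΓ0 : Γ 0 = 0 := map_zero Γₗ
  rcases hΓ_iso with hStar | hDia
  · have hweight : ∀ v, ∑ j, wtStarK k (Γ v j) = ∑ j, wtStarK k (v j) := fun v => by
      simpa [dStarK, hΓ0] using hStar 0 v
    refine (LinearEquiv.ofBijective Γₗ hΓ_bij).exists_perm_units_of_sum_weight_eq (wtStarK k)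
      (wtStarK_zero k) ?_ (fun a ha => ?_) hweight
    · rw [wtStarK_one hk]
      positivity
    · rw [wtStarK_one hk]
      exact two_pow_le_wtStarK ha
  · have hweight : ∀ v, ∑ j, wtDia (Γ v j) = ∑ j, wtDia (v j) := fun v => by
      simpa [dDia, hΓ0] using hDia 0 v
    refine (LinearEquiv.ofBijective Γₗ hΓ_bij).exists_perm_units_of_sum_weight_eq wtDia
      (wtDia_zero _) ?_ (fun a ha => ?_) hweight
    · rw [wtDia_one]
      exact one_ne_zero
    · rw [wtDia_one]
      exact one_le_wtDia ha
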